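/- For every α ∈ ℂ and every ω ∈ ℂ with ω³ = 1, the algebras 𝔠₆₉(α) and 𝔠₆₉(ωα) are isomorphic, where 𝔠₆₉(α) is the commutative algebra on ℂ⁵ with basis e₁,…,e₅ and nonzero basis products e₁e₁ = e₄, e₁e₂ = α e₅, e₁e₃ = e₅, e₂e₂ = e₅, e₂e₃ = e₄, e₄e₄ = e₅. -/

import Mathlib

/-- Structure constants of the algebra 𝔠₆₉(α) on ℂ⁵ (basis `e₁, …, e₅` indexed by
`Fin 5`). Nonzero products: e₁e₁ = e₄, e₁e₂ = α e₅, e₁e₃ = e₅, e₂e₂ = e₅,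
e₂e₃ = e₄, e₄e₄ = e₅ (extended symmetrically). -/
noncomputable def tbl69 (α : ℂ) : Fin 5 → Fin 5 → Fin 5 → ℂ :=
  ![![![0,0,0,1,0], ![0,0,0,0,α], ![0,0,0,0,1], 0, 0],
    ![![0,0,0,0,α], ![0,0,0,0,1], ![0,0,0,1,0], 0, 0],
    ![![0,0,0,0,1], ![0,0,0,1,0], 0, 0, 0],
    ![0, 0, 0, ![0,0,0,0,1], 0],
    0]

/-- The bilinear multiplication of the algebra 𝔠₆₉(α) on ℂ⁵. -/
noncomputable def mul69 (α : ℂ) (x y : Fin 5 → ℂ) : Fin 5 → ℂ :=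
  fun k => ∑ i, ∑ j, x i * y j * tbl69 α i j k

/-!
Rescale the basis diagonally, `e_i ↦ ω^{w_i} e_i` with weights `w = (1, 2, 0, 2, 1)`.
Every defining product `e_i e_j = e_k` satisfies `w_i + w_j ≡ w_k (mod 3)`, so it is preserved,
except `e₁e₂ = α e₅`, where the weights are off by one: the surplus factor `ω` is absorbed
into the coefficient `α ↦ ωα`.
-/

def structMul {ι K : Type*} [Fintype ι] [CommSemiring K] (T : ι → ι → ι → K) (x y : ι → K) :
    ι → K :=
  fun k => ∑ i, ∑ j, x i * y j * T i j k

section DiagonalScaling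

variable {ι K : Type*} [CommRing K]

def diagonalScaling (u : ι → Kˣ) : (ι → K) ≃ₗ[K] (ι → K) :=
  LinearEquiv.piCongrRight fun i => LinearEquiv.smulOfUnit (u i)

@[simp]
theorem diagonalScaling_apply (u : ι → Kˣ) (x : ι → K) (i : ι) :
    diagonalScaling u x i = u i * x i :=
  rfl

theorem diagonalScaling_structMul [Fintype ι] {T T' : ι → ι → ι → K} (u : ι → Kˣ)
    (h : ∀ i j k, u k * T i j k = u i * u j * T' i j k) (x y : ι → K) :
    diagonalScaling u (structMul T x y) =
      structMul T' (diagonalScaling u x) (diagonalScaling u y) := by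
  funext k
  simp only [diagonalScaling_apply, structMul, Finset.mul_sum]
  refine Finset.sum_congr rfl fun i _ => Finset.sum_congr rfl fun j _ => ?_
  linear_combination x i * y j * h i j k

end DiagonalScaling

theorem mul69_eq_structMul (α : ℂ) : mul69 α = structMul (tbl69 α) :=
  rfl

def c69Weight : Fin 5 → ℕ := ![1, 2, 0, 2, 1]

theorem tbl69_scaling {α ω : ℂ} (hω : ω ^ 3 = 1) (i j k : Fin 5) :
    ω ^ c69Weight k * tbl69 α i j k =
      ω ^ c69Weight i * ω ^ c69Weight j * tbl69 (ω * α) i j k := by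
  fin_cases i <;> fin_cases j <;> fin_cases k <;> simp [tbl69, c69Weight] <;> grind

theorem c69_iso (α ω : ℂ) (hω : ω ^ 3 = 1) :
    ∃ φ : (Fin 5 → ℂ) ≃ₗ[ℂ] (Fin 5 → ℂ),
      ∀ x y : Fin 5 → ℂ, φ (mul69 α x y) = mul69 (ω * α) (φ x) (φ y) := by
  have hω₀ : ω ≠ 0 := by
    rintro rfl
    norm_num at hω
  refine ⟨diagonalScaling fun i => Units.mk0 ω hω₀ ^ c69Weight i, fun x y => ?_⟩
  rw [mul69_eq_structMul, mul69_eq_structMul]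
  refine diagonalScaling_structMul _ (fun i j k => ?_) x y
  simpa only [Units.val_pow_eq_pow_val, Units.val_mk0] using tbl69_scaling hω i j k
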